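/- Let I ⊆ ℝ be an open interval and U : I → ℝ a C² function with U > 0 satisfying the translator ODE U''(s) = −U(s)·U'(s)⁴ on I. Let h ∈ ℝ and assume U(s)² − h² > 0 and U(s)²·(1 − U'(s)²) − h² > 0 on I. Let R_h, Λ_h, Θ_h : I → ℝ be C² functions with R_h = √(U² − h²), Λ_h'(s) = (U(s)/(U(s)² − h²))·√( U(s)²·(1 − U'(s)²) − h² ), and Θ_h'(s) = (h/U(s)²)·Λ_h'(s). Define the helicoidal patch X^h(s,t) = (R_h(s)·cos(t − Θ_h(s)), R_h(s)·sin(t − Θ_h(s)), Λ_h(s) + h·(t − Θ_h(s))). Then X^h satisfies K = n₃⁴ at every point of I × ℝ; that is, every member of the Bour family of isometric helicoidal surfaces of pitch h built from a K^{1/4}-translator Bour function U is again a K^{1/4}-translator. -/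

import Mathlib

/-!
`X^h` is the screw motion, by the angle `t - Θ_h(s)`, of the profile curve `(R_h, 0, Λ_h)`, so
all its partial derivatives are rotations about `e₃` of vectors depending on `s` alone, and `K`
and `n₃` can be computed on the profile. The relations defining `R_h, Θ_h, Λ_h` say exactly that
the induced metric is `ds² + U² dt²`, i.e. `E = 1`, `F = 0`, `G = U²`. Differentiating these
identities and substituting gives `‖X_s × X_t‖ = U` and `LN - M² = -U³ U''` for the
second fundamental form taken against `X_s × X_t`, hence `K = -U''/U` (the theorema egregium for
this metric), while `n₃ = R_h R_h' / U = U'`. The translator ODE then reads `K = U'⁴ = n₃⁴`.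
-/

open Real

noncomputable section

/-- Euclidean dot product on `ℝ³ = ℝ × ℝ × ℝ`. -/
def dot3 (v w : ℝ × ℝ × ℝ) : ℝ := v.1 * w.1 + v.2.1 * w.2.1 + v.2.2 * w.2.2

/-- Cross product on `ℝ³ = ℝ × ℝ × ℝ`. -/
def cross3 (v w : ℝ × ℝ × ℝ) : ℝ × ℝ × ℝ :=
  (v.2.1 * w.2.2 - v.2.2 * w.2.1,
   v.2.2 * w.1 - v.1 * w.2.2,
   v.1 * w.2.1 - v.2.1 * w.1)

/-- The vertical unit vector `e₃ = (0,0,1)`. -/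
def e3 : ℝ × ℝ × ℝ := ((0 : ℝ), (0 : ℝ), (1 : ℝ))

/-- Partial derivative of a parametrized surface w.r.t. the first parameter. -/
def pd1 (X : ℝ → ℝ → ℝ × ℝ × ℝ) (s t : ℝ) : ℝ × ℝ × ℝ := deriv (fun u => X u t) s

/-- Partial derivative of a parametrized surface w.r.t. the second parameter. -/
def pd2 (X : ℝ → ℝ → ℝ × ℝ × ℝ) (s t : ℝ) : ℝ × ℝ × ℝ := deriv (fun v => X s v) t

/-- Unit normal `n = (X_s × X_t)/‖X_s × X_t‖`. -/
def unitNormal (X : ℝ → ℝ → ℝ × ℝ × ℝ) (s t : ℝ) : ℝ × ℝ × ℝ :=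
  (Real.sqrt (dot3 (cross3 (pd1 X s t) (pd2 X s t)) (cross3 (pd1 X s t) (pd2 X s t))))⁻¹ •
    cross3 (pd1 X s t) (pd2 X s t)

/-- Angle function `n₃ = n · e₃`. -/
def angleFun (X : ℝ → ℝ → ℝ × ℝ × ℝ) (s t : ℝ) : ℝ := dot3 (unitNormal X s t) e3

/-- Gaussian curvature `K = ((X_ss·n)(X_tt·n) − (X_st·n)²)/(EG − F²)`. -/
def gauss (X : ℝ → ℝ → ℝ × ℝ × ℝ) (s t : ℝ) : ℝ :=
  (dot3 (pd1 (pd1 X) s t) (unitNormal X s t) * dot3 (pd2 (pd2 X) s t) (unitNormal X s t)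
      - (dot3 (pd2 (pd1 X) s t) (unitNormal X s t)) ^ 2)
    / (dot3 (pd1 X s t) (pd1 X s t) * dot3 (pd2 X s t) (pd2 X s t)
        - (dot3 (pd1 X s t) (pd2 X s t)) ^ 2)

open Filter Topology

def rotZ (φ : ℝ) (v : ℝ × ℝ × ℝ) : ℝ × ℝ × ℝ :=
  (cos φ * v.1 - sin φ * v.2.1, sin φ * v.1 + cos φ * v.2.1, v.2.2)

lemma dot3_rotZ (φ : ℝ) (v w : ℝ × ℝ × ℝ) : dot3 (rotZ φ v) (rotZ φ w) = dot3 v w := by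
  simp only [dot3, rotZ]
  linear_combination (v.1 * w.1 + v.2.1 * w.2.1) * sin_sq_add_cos_sq φ

lemma cross3_rotZ (φ : ℝ) (v w : ℝ × ℝ × ℝ) :
    cross3 (rotZ φ v) (rotZ φ w) = rotZ φ (cross3 v w) := by
  simp only [cross3, rotZ, Prod.mk.injEq]
  refine ⟨by ring, by ring, ?_⟩
  linear_combination (v.1 * w.2.1 - v.2.1 * w.1) * sin_sq_add_cos_sq φ

lemma hasDerivAt_rotZ {φ a b c : ℝ → ℝ} {φ' a' b' c' x : ℝ} (hφ : HasDerivAt φ φ' x)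
    (ha : HasDerivAt a a' x) (hb : HasDerivAt b b' x) (hc : HasDerivAt c c' x) :
    HasDerivAt (fun y => rotZ (φ y) (a y, b y, c y))
      (rotZ (φ x) ((a', b', c') + φ' • cross3 e3 (a x, b x, c x))) x := by
  have hcos := (hasDerivAt_cos (φ x)).comp x hφ
  have hsin := (hasDerivAt_sin (φ x)).comp x hφ
  refine (((hcos.mul ha).sub (hsin.mul hb)).prodMk
    (((hsin.mul ha).add (hcos.mul hb)).prodMk hc)).congr_deriv ?_
  simp only [rotZ, cross3, e3, Prod.mk_add_mk, Prod.smul_mk, smul_eq_mul, Function.comp_apply]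
  ext <;> simp only <;> ring

lemma dot3_smul_right (c : ℝ) (v w : ℝ × ℝ × ℝ) : dot3 v (c • w) = c * dot3 v w := by
  simp only [dot3, Prod.smul_fst, Prod.smul_snd, smul_eq_mul]; ring

lemma dot3_cross3_self (v w : ℝ × ℝ × ℝ) :
    dot3 (cross3 v w) (cross3 v w) = dot3 v v * dot3 w w - dot3 v w ^ 2 := by
  simp only [dot3, cross3]; ring

lemma gauss_eq_div_cross3 (X : ℝ → ℝ → ℝ × ℝ × ℝ) (s t : ℝ) :
    gauss X s t =
      (dot3 (pd1 (pd1 X) s t) (cross3 (pd1 X s t) (pd2 X s t)) *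
          dot3 (pd2 (pd2 X) s t) (cross3 (pd1 X s t) (pd2 X s t)) -
        dot3 (pd2 (pd1 X) s t) (cross3 (pd1 X s t) (pd2 X s t)) ^ 2) /
        dot3 (cross3 (pd1 X s t) (pd2 X s t)) (cross3 (pd1 X s t) (pd2 X s t)) ^ 2 := by
  simp only [gauss, unitNormal, dot3_smul_right, ← dot3_cross3_self]
  generalize cross3 (pd1 X s t) (pd2 X s t) = N
  have hc : (√(dot3 N N))⁻¹ ^ 2 = (dot3 N N)⁻¹ := by
    rw [inv_pow, sq_sqrt (by simp only [dot3, ← sq]; positivity)]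
  linear_combination (dot3 (pd1 (pd1 X) s t) N * dot3 (pd2 (pd2 X) s t) N -
      dot3 (pd2 (pd1 X) s t) N ^ 2) / dot3 N N * hc

lemma angleFun_eq_div_cross3 (X : ℝ → ℝ → ℝ × ℝ × ℝ) (s t : ℝ) :
    angleFun X s t = (cross3 (pd1 X s t) (pd2 X s t)).2.2 /
      √(dot3 (cross3 (pd1 X s t) (pd2 X s t)) (cross3 (pd1 X s t) (pd2 X s t))) := by
  simp only [angleFun, unitNormal, e3, dot3, Prod.smul_fst, Prod.smul_snd, smul_eq_mul]
  ring

def helicoid (h : ℝ) (R Θ Λ : ℝ → ℝ) (s t : ℝ) : ℝ × ℝ × ℝ :=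
  rotZ (t - Θ s) (R s, 0, Λ s + h * (t - Θ s))

section Helicoid

variable {h : ℝ} {R Θ Λ : ℝ → ℝ} {s t : ℝ}

lemma pd2_helicoid : pd2 (helicoid h R Θ Λ) s t = rotZ (t - Θ s) (0, R s, h) := by
  have hφ : HasDerivAt (fun τ => τ - Θ s) 1 t := (hasDerivAt_id t).sub_const _
  refine ((hasDerivAt_rotZ hφ (hasDerivAt_const _ _) (hasDerivAt_const _ _)
    ((hφ.const_mul h).const_add _)).congr_deriv ?_).deriv
  simp [cross3, e3]

lemma pd2_pd2_helicoid : pd2 (pd2 (helicoid h R Θ Λ)) s t = rotZ (t - Θ s) (-R s, 0, 0) := by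
  have hφ : HasDerivAt (fun τ => τ - Θ s) 1 t := (hasDerivAt_id t).sub_const _
  have hX : (fun τ => pd2 (helicoid h R Θ Λ) s τ) = fun τ => rotZ (τ - Θ s) (0, R s, h) :=
    funext fun τ => pd2_helicoid
  rw [pd2, hX]
  refine ((hasDerivAt_rotZ hφ (hasDerivAt_const _ _) (hasDerivAt_const _ _)
    (hasDerivAt_const _ _)).congr_deriv ?_).deriv
  simp [cross3, e3]

lemma pd1_helicoid (hR : DifferentiableAt ℝ R s) (hΘ : DifferentiableAt ℝ Θ s)
    (hΛ : DifferentiableAt ℝ Λ s) :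
    pd1 (helicoid h R Θ Λ) s t =
      rotZ (t - Θ s) (deriv R s, -(R s * deriv Θ s), deriv Λ s - h * deriv Θ s) := by
  have hφ : HasDerivAt (fun x => t - Θ x) (-deriv Θ s) s :=
    by simpa using hΘ.hasDerivAt.const_sub t
  refine ((hasDerivAt_rotZ hφ hR.hasDerivAt (hasDerivAt_const _ _)
    (hΛ.hasDerivAt.add (hφ.const_mul h))).congr_deriv ?_).deriv
  simp only [cross3, e3, Prod.mk_add_mk, Prod.smul_mk, smul_eq_mul]
  congr 1; ext <;> simp only <;> ring

lemma pd2_pd1_helicoid (hR : DifferentiableAt ℝ R s) (hΘ : DifferentiableAt ℝ Θ s)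
    (hΛ : DifferentiableAt ℝ Λ s) :
    pd2 (pd1 (helicoid h R Θ Λ)) s t = rotZ (t - Θ s) (R s * deriv Θ s, deriv R s, 0) := by
  have hφ : HasDerivAt (fun τ => τ - Θ s) 1 t := (hasDerivAt_id t).sub_const _
  have hX : (fun τ => pd1 (helicoid h R Θ Λ) s τ) = fun τ =>
      rotZ (τ - Θ s) (deriv R s, -(R s * deriv Θ s), deriv Λ s - h * deriv Θ s) :=
    funext fun τ => pd1_helicoid hR hΘ hΛ
  rw [pd2, hX]
  refine ((hasDerivAt_rotZ hφ (hasDerivAt_const _ _) (hasDerivAt_const _ _)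
    (hasDerivAt_const _ _)).congr_deriv ?_).deriv
  simp [cross3, e3]

lemma pd1_pd1_helicoid (hR : ∀ᶠ x in 𝓝 s, DifferentiableAt ℝ R x)
    (hΘ : ∀ᶠ x in 𝓝 s, DifferentiableAt ℝ Θ x) (hΛ : ∀ᶠ x in 𝓝 s, DifferentiableAt ℝ Λ x)
    (hR' : DifferentiableAt ℝ (deriv R) s) (hΘ' : DifferentiableAt ℝ (deriv Θ) s)
    (hΛ' : DifferentiableAt ℝ (deriv Λ) s) :
    pd1 (pd1 (helicoid h R Θ Λ)) s t =
      rotZ (t - Θ s) (deriv (deriv R) s - R s * deriv Θ s ^ 2,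
        -(2 * deriv R s * deriv Θ s + R s * deriv (deriv Θ) s),
        deriv (deriv Λ) s - h * deriv (deriv Θ) s) := by
  have hX : (fun x => pd1 (helicoid h R Θ Λ) x t) =ᶠ[𝓝 s] fun x =>
      rotZ (t - Θ x) (deriv R x, -(R x * deriv Θ x), deriv Λ x - h * deriv Θ x) := by
    filter_upwards [hR, hΘ, hΛ] with x hRx hΘx hΛx using pd1_helicoid hRx hΘx hΛx
  have hφ : HasDerivAt (fun x => t - Θ x) (-deriv Θ s) s :=
    by simpa using hΘ.self_of_nhds.hasDerivAt.const_sub t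
  rw [pd1, hX.deriv_eq]
  refine ((hasDerivAt_rotZ hφ hR'.hasDerivAt
    (hR.self_of_nhds.hasDerivAt.fun_mul hΘ'.hasDerivAt).fun_neg
    (hΛ'.hasDerivAt.sub (hΘ'.hasDerivAt.const_mul h))).congr_deriv ?_).deriv
  simp only [cross3, e3, Prod.mk_add_mk, Prod.smul_mk, smul_eq_mul]
  congr 1; ext <;> simp only <;> ring

end Helicoid

lemma dot3_cross3_helicoid_self (r r' θ' α h u : ℝ) (hG : r ^ 2 + h ^ 2 = u ^ 2)
    (hF : h * α = r ^ 2 * θ') (hE : r' ^ 2 + (r * θ') ^ 2 + α ^ 2 = 1) :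
    dot3 (cross3 (r', -(r * θ'), α) (0, r, h)) (cross3 (r', -(r * θ'), α) (0, r, h)) = u ^ 2 := by
  rw [dot3_cross3_self]
  simp only [dot3]
  linear_combination (r ^ 2 + h ^ 2) * hE + hG - (h * α - r ^ 2 * θ') * hF

-- The vectors are `X_s, X_t, X_ss, X_tt, X_st` of `helicoid h R Θ Λ` in the rotating frame, with
-- `α = Λ' - hΘ'`; the hypotheses are `G = u²`, `F = 0`, `E = 1` and their derivatives.
lemma helicoid_curvature_numerator (r r' r'' θ' θ'' α α' h u u' u'' : ℝ)
    (hG : r ^ 2 + h ^ 2 = u ^ 2) (hG' : r * r' = u * u')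
    (hG'' : r' ^ 2 + r * r'' = u' ^ 2 + u * u'')
    (hF : h * α = r ^ 2 * θ') (hE : r' ^ 2 + (r * θ') ^ 2 + α ^ 2 = 1)
    (hE' : r' * r'' + r * θ' * (r' * θ' + r * θ'') + α * α' = 0) :
    dot3 (r'' - r * θ' ^ 2, -(2 * r' * θ' + r * θ''), α') (cross3 (r', -(r * θ'), α) (0, r, h)) *
        dot3 (-r, 0, 0) (cross3 (r', -(r * θ'), α) (0, r, h)) -
      dot3 (r * θ', r', 0) (cross3 (r', -(r * θ'), α) (0, r, h)) ^ 2 = -u ^ 3 * u'' := by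
  have hN : cross3 (r', -(r * θ'), α) (0, r, h) = (-(r * (α + h * θ')), -(h * r'), r * r') := by
    simp only [cross3, Prod.mk.injEq]; exact ⟨by ring, by ring, by ring⟩
  have hl : α * (α + h * θ') + r' ^ 2 = 1 := by linear_combination hE + θ' * hF
  have hXtt : dot3 (-r, 0, 0) (cross3 (r', -(r * θ'), α) (0, r, h)) = α * u ^ 2 := by
    rw [hN]; simp only [dot3]; linear_combination -h * hF + α * hG
  have hXst : dot3 (r * θ', r', 0) (cross3 (r', -(r * θ'), α) (0, r, h)) = -h := by
    rw [hN]; simp only [dot3]; linear_combination (α + h * θ') * hF - h * hl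
  have hXss : α * dot3 (r'' - r * θ' ^ 2, -(2 * r' * θ' + r * θ''), α')
      (cross3 (r', -(r * θ'), α) (0, r, h)) = r ^ 2 * θ' ^ 2 - r * r'' := by
    rw [hN]; simp only [dot3]
    linear_combination (r * r' * θ'' + 2 * r' ^ 2 * θ') * hF + r * r' * hE'
      - r * (r'' - r * θ' ^ 2) * hl
  rw [hXtt, hXst]
  linear_combination u ^ 2 * hXss - u ^ 2 * hG'' + (r * r' + u * u') * hG'
    - (r ^ 2 * θ' + h * (α + h * θ')) * hF - (r' ^ 2 + r ^ 2 * θ' ^ 2) * hG + h ^ 2 * hl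

lemma HasDerivAt.unique_of_eqOn {f g : ℝ → ℝ} {f' g' x : ℝ} {I : Set ℝ} (hI : IsOpen I)
    (hx : x ∈ I) (hfg : Set.EqOn f g I) (hf : HasDerivAt f f' x) (hg : HasDerivAt g g' x) :
    f' = g' :=
  hf.unique (hg.congr_of_eventuallyEq (hfg.eventuallyEq_of_mem (hI.mem_nhds hx)))

lemma ContDiffOn.differentiableAt_of_isOpen {f : ℝ → ℝ} {I : Set ℝ} {x : ℝ}
    (hf : ContDiffOn ℝ 2 f I) (hI : IsOpen I) (hx : x ∈ I) : DifferentiableAt ℝ f x :=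
  (hf.contDiffAt (hI.mem_nhds hx)).differentiableAt two_ne_zero

lemma ContDiffOn.differentiableAt_deriv {f : ℝ → ℝ} {I : Set ℝ} {x : ℝ}
    (hf : ContDiffOn ℝ 2 f I) (hI : IsOpen I) (hx : x ∈ I) : DifferentiableAt ℝ (deriv f) x :=
  ((hf.deriv_of_isOpen hI (m := 1) (by norm_num)).differentiableOn one_ne_zero).differentiableAt
    (hI.mem_nhds hx)

lemma mul_deriv_eq_of_sq_add_sq {I : Set ℝ} {h x : ℝ} {R U : ℝ → ℝ} (hI : IsOpen I)
    (hG : ∀ x ∈ I, R x ^ 2 + h ^ 2 = U x ^ 2) (hx : x ∈ I) (hR : DifferentiableAt ℝ R x)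
    (hU : DifferentiableAt ℝ U x) : R x * deriv R x = U x * deriv U x := by
  have := HasDerivAt.unique_of_eqOn hI hx hG ((hR.hasDerivAt.fun_pow 2).add_const (h ^ 2))
    (hU.hasDerivAt.fun_pow 2)
  linear_combination this / 2

/-- The helicoid `helicoid h R Θ Λ` carries the metric `ds² + U(s)² dt²` over `I`:
the three fields say `G = U²`, `F = 0` and `E = 1`. -/
structure IsBourProfile (I : Set ℝ) (h : ℝ) (U R Θ Λ : ℝ → ℝ) : Prop where
  sq_add_sq : ∀ x ∈ I, R x ^ 2 + h ^ 2 = U x ^ 2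
  orthogonal : ∀ x ∈ I, h * (deriv Λ x - h * deriv Θ x) = R x ^ 2 * deriv Θ x
  unit_speed : ∀ x ∈ I,
    deriv R x ^ 2 + (R x * deriv Θ x) ^ 2 + (deriv Λ x - h * deriv Θ x) ^ 2 = 1

namespace IsBourProfile

variable {I : Set ℝ} {h s : ℝ} {U R Θ Λ : ℝ → ℝ}

theorem angleFun_helicoid (hB : IsBourProfile I h U R Θ Λ) (hI : IsOpen I) (hs : s ∈ I)
    (hU : DifferentiableAt ℝ U s) (hR : DifferentiableAt ℝ R s) (hΘ : DifferentiableAt ℝ Θ s)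
    (hΛ : DifferentiableAt ℝ Λ s) (hU0 : 0 < U s) (t : ℝ) :
    angleFun (helicoid h R Θ Λ) s t = deriv U s := by
  rw [angleFun_eq_div_cross3, pd1_helicoid hR hΘ hΛ, pd2_helicoid, cross3_rotZ, dot3_rotZ,
    dot3_cross3_helicoid_self _ _ _ _ _ _ (hB.sq_add_sq s hs) (hB.orthogonal s hs)
      (hB.unit_speed s hs), sqrt_sq hU0.le]
  simp only [rotZ, cross3]
  field_simp
  linear_combination mul_deriv_eq_of_sq_add_sq hI hB.sq_add_sq hs hR hU

theorem gauss_helicoid (hB : IsBourProfile I h U R Θ Λ) (hI : IsOpen I) (hs : s ∈ I)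
    (hU : ContDiffOn ℝ 2 U I) (hR : ContDiffOn ℝ 2 R I) (hΘ : ContDiffOn ℝ 2 Θ I)
    (hΛ : ContDiffOn ℝ 2 Λ I) (hU0 : U s ≠ 0) (t : ℝ) :
    gauss (helicoid h R Θ Λ) s t = -deriv (deriv U) s / U s := by
  have hnear : ∀ {f : ℝ → ℝ}, ContDiffOn ℝ 2 f I → ∀ᶠ x in 𝓝 s, DifferentiableAt ℝ f x :=
    fun hf => eventually_of_mem (hI.mem_nhds hs) fun _ hx => hf.differentiableAt_of_isOpen hI hx
  have dR := (hnear hR).self_of_nhds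
  have dΘ := (hnear hΘ).self_of_nhds
  have dΛ := (hnear hΛ).self_of_nhds
  have dU := (hnear hU).self_of_nhds
  have dR' := hR.differentiableAt_deriv hI hs
  have dΘ' := hΘ.differentiableAt_deriv hI hs
  have dΛ' := hΛ.differentiableAt_deriv hI hs
  have dU' := hU.differentiableAt_deriv hI hs
  have hG' : ∀ x ∈ I, R x * deriv R x = U x * deriv U x := fun x hx =>
    mul_deriv_eq_of_sq_add_sq hI hB.sq_add_sq hx (hR.differentiableAt_of_isOpen hI hx)
      (hU.differentiableAt_of_isOpen hI hx)
  have hG'' := HasDerivAt.unique_of_eqOn hI hs hG' (dR.hasDerivAt.fun_mul dR'.hasDerivAt)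
    (dU.hasDerivAt.fun_mul dU'.hasDerivAt)
  have hE' := HasDerivAt.unique_of_eqOn hI hs hB.unit_speed
    (((dR'.hasDerivAt.fun_pow 2).fun_add ((dR.hasDerivAt.fun_mul dΘ'.hasDerivAt).fun_pow 2)).fun_add
      ((dΛ'.hasDerivAt.fun_sub (dΘ'.hasDerivAt.const_mul h)).fun_pow 2))
    (hasDerivAt_const s 1)
  rw [gauss_eq_div_cross3, pd1_pd1_helicoid (hnear hR) (hnear hΘ) (hnear hΛ) dR' dΘ' dΛ',
    pd2_pd1_helicoid dR dΘ dΛ, pd2_pd2_helicoid, pd1_helicoid dR dΘ dΛ, pd2_helicoid,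
    cross3_rotZ, dot3_rotZ, dot3_rotZ, dot3_rotZ, dot3_rotZ,
    helicoid_curvature_numerator _ _ _ _ _ _ _ _ _ _ (deriv (deriv U) s) (hB.sq_add_sq s hs)
      (hG' s hs) (by linear_combination hG'') (hB.orthogonal s hs) (hB.unit_speed s hs)
      (by linear_combination hE' / 2),
    dot3_cross3_helicoid_self _ _ _ _ _ _ (hB.sq_add_sq s hs) (hB.orthogonal s hs)
      (hB.unit_speed s hs)]
  field_simp

end IsBourProfile

theorem isBourProfile_bourFamily {I : Set ℝ} {h : ℝ} {U Rh Θh Λh : ℝ → ℝ} (hI : IsOpen I)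
    (hU : DifferentiableOn ℝ U I) (hRh : DifferentiableOn ℝ Rh I) (hU0 : ∀ s ∈ I, U s ≠ 0)
    (hUh : ∀ s ∈ I, 0 < U s ^ 2 - h ^ 2)
    (hpos : ∀ s ∈ I, 0 ≤ U s ^ 2 * (1 - deriv U s ^ 2) - h ^ 2)
    (hR : ∀ s ∈ I, Rh s = √(U s ^ 2 - h ^ 2))
    (hΛ' : ∀ s ∈ I,
      deriv Λh s = U s / (U s ^ 2 - h ^ 2) * √(U s ^ 2 * (1 - deriv U s ^ 2) - h ^ 2))
    (hΘ' : ∀ s ∈ I, deriv Θh s = h / U s ^ 2 * deriv Λh s) :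
    IsBourProfile I h U Rh Θh Λh := by
  have hG : ∀ x ∈ I, Rh x ^ 2 + h ^ 2 = U x ^ 2 := fun x hx => by
    rw [hR x hx, sq_sqrt (hUh x hx).le]; ring
  refine ⟨hG, fun x hx => ?_, fun x hx => ?_⟩
  · have hU0 := hU0 x hx
    rw [hΘ' x hx, ← sub_eq_of_eq_add (hG x hx).symm]
    field_simp
  · have hU0 := hU0 x hx
    have hR0 : Rh x ≠ 0 := by
      rw [hR x hx]; exact (sqrt_pos.mpr (hUh x hx)).ne'
    have hR' : deriv Rh x = U x * deriv U x / Rh x := by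
      rw [eq_div_iff hR0]
      linear_combination mul_deriv_eq_of_sq_add_sq hI hG hx
        (hRh.differentiableAt (hI.mem_nhds hx)) (hU.differentiableAt (hI.mem_nhds hx))
    have hW := sq_sqrt (hpos x hx)
    set W := √(U x ^ 2 * (1 - deriv U x ^ 2) - h ^ 2)
    have hD : U x ^ 2 - h ^ 2 = Rh x ^ 2 := by linear_combination -(hG x hx)
    rw [hR', hΘ' x hx, hΛ' x hx, hD]
    field_simp
    linear_combination
      (W ^ 2 * (U x ^ 2 - h ^ 2 + Rh x ^ 2) + Rh x ^ 2 * U x ^ 2 - Rh x ^ 2 * W ^ 2) * hD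
        + Rh x ^ 2 * U x ^ 2 * hW

theorem bour_family_translator_general
    (I : Set ℝ) (hIopen : IsOpen I)
    (U : ℝ → ℝ) (hUC : ContDiffOn ℝ 2 U I) (hUpos : ∀ s ∈ I, 0 < U s)
    (hODE : ∀ s ∈ I, deriv (deriv U) s = -(U s) * (deriv U s) ^ 4)
    (h : ℝ)
    (hUh : ∀ s ∈ I, 0 < (U s) ^ 2 - h ^ 2)
    (hpos : ∀ s ∈ I, 0 < (U s) ^ 2 * (1 - (deriv U s) ^ 2) - h ^ 2)
    (Rh Λh Θh : ℝ → ℝ)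
    (hRC : ContDiffOn ℝ 2 Rh I) (hΛC : ContDiffOn ℝ 2 Λh I) (hΘC : ContDiffOn ℝ 2 Θh I)
    (hR : ∀ s ∈ I, Rh s = Real.sqrt ((U s) ^ 2 - h ^ 2))
    (hΛ' : ∀ s ∈ I, deriv Λh s =
      (U s / ((U s) ^ 2 - h ^ 2)) *
        Real.sqrt ((U s) ^ 2 * (1 - (deriv U s) ^ 2) - h ^ 2))
    (hΘ' : ∀ s ∈ I, deriv Θh s = (h / (U s) ^ 2) * deriv Λh s)
    (X : ℝ → ℝ → ℝ × ℝ × ℝ)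
    (hX : ∀ s t, X s t =
      (Rh s * Real.cos (t - Θh s), Rh s * Real.sin (t - Θh s), Λh s + h * (t - Θh s))) :
    ∀ s ∈ I, ∀ t : ℝ, gauss X s t = (angleFun X s t) ^ 4 := by
  have hXh : X = helicoid h Rh Θh Λh := by
    funext s t
    rw [hX, helicoid, rotZ]
    ext <;> dsimp only <;> ring
  have hB : IsBourProfile I h U Rh Θh Λh :=
    isBourProfile_bourFamily hIopen (hUC.differentiableOn two_ne_zero)
      (hRC.differentiableOn two_ne_zero) (fun s hs => (hUpos s hs).ne') hUh
      (fun s hs => (hpos s hs).le) hR hΛ' hΘ'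
  intro s hs t
  have hU0 := hUpos s hs
  rw [hXh, hB.gauss_helicoid hIopen hs hUC hRC hΘC hΛC hU0.ne' t,
    hB.angleFun_helicoid hIopen hs (hUC.differentiableAt_of_isOpen hIopen hs)
      (hRC.differentiableAt_of_isOpen hIopen hs) (hΘC.differentiableAt_of_isOpen hIopen hs)
      (hΛC.differentiableAt_of_isOpen hIopen hs) hU0 t, hODE s hs]
  field_simp

/-- If the Bour function `U` satisfies the translator ODE
`U'' = −U·(U')⁴`, then every member of the Bour family of isometric helicoidal surfaces of
pitch `h` built from `U` is again a `K^{1/4}`-translator: `K = n₃⁴` everywhere. -/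
theorem bour_family_translator
    (I : Set ℝ) (hIopen : IsOpen I) (hIconn : I.OrdConnected)
    (U : ℝ → ℝ) (hUC : ContDiffOn ℝ 2 U I) (hUpos : ∀ s ∈ I, 0 < U s)
    (hODE : ∀ s ∈ I, deriv (deriv U) s = -(U s) * (deriv U s) ^ 4)
    (h : ℝ)
    (hUh : ∀ s ∈ I, 0 < (U s) ^ 2 - h ^ 2)
    (hpos : ∀ s ∈ I, 0 < (U s) ^ 2 * (1 - (deriv U s) ^ 2) - h ^ 2)
    (Rh Λh Θh : ℝ → ℝ)
    (hRC : ContDiffOn ℝ 2 Rh I) (hΛC : ContDiffOn ℝ 2 Λh I) (hΘC : ContDiffOn ℝ 2 Θh I)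
    (hR : ∀ s ∈ I, Rh s = Real.sqrt ((U s) ^ 2 - h ^ 2))
    (hΛ' : ∀ s ∈ I, deriv Λh s =
      (U s / ((U s) ^ 2 - h ^ 2)) *
        Real.sqrt ((U s) ^ 2 * (1 - (deriv U s) ^ 2) - h ^ 2))
    (hΘ' : ∀ s ∈ I, deriv Θh s = (h / (U s) ^ 2) * deriv Λh s)
    (X : ℝ → ℝ → ℝ × ℝ × ℝ)
    (hX : ∀ s t, X s t =
      (Rh s * Real.cos (t - Θh s), Rh s * Real.sin (t - Θh s), Λh s + h * (t - Θh s))) :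
    ∀ s ∈ I, ∀ t : ℝ, gauss X s t = (angleFun X s t) ^ 4 :=
  bour_family_translator_general I hIopen U hUC hUpos hODE h hUh hpos Rh Λh Θh hRC hΛC hΘC hR hΛ'
    hΘ' X hX
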